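/- arXiv:1807.01003 — 7 statements merged into one kernel-verified Lean document; each statement's English description precedes it below -/
import Mathlib

section
/- In a partially ordered vector space, if 0 ≤ x₁ ≤ x₂ and x₂ is disjoint to a positive vector y, then x₁ is disjoint to y. -/
/-- Two vectors are disjoint: the upper bounds of {x+y, -x-y} equal those of {x-y, y-x}. -/
def Disj {X : Type*} [AddCommGroup X] [PartialOrder X] (x y : X) : Prop :=
  upperBounds ({x + y, -x - y} : Set X) = upperBounds ({x - y, y - x} : Set X)

section OrderedAddCommGroup

variable {X : Type*} [AddCommGroup X] [PartialOrder X] [IsOrderedAddMonoid X]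

theorem disj_iff_of_nonneg {x y : X} (hx : 0 ≤ x) (hy : 0 ≤ y) :
    Disj x y ↔ ∀ z, x - y ≤ z → y - x ≤ z → x + y ≤ z := by
  have hsum : IsGreatest ({x + y, -x - y} : Set X) (x + y) := by
    refine ⟨Set.mem_insert _ _, ?_⟩
    rintro _ (rfl | rfl)
    · exact le_rfl
    · rw [← neg_add']
      exact neg_le_self (add_nonneg hx hy)
  rw [Disj, hsum.upperBounds_eq]
  constructor
  · intro h z h₁ h₂
    have hz : z ∈ upperBounds ({x - y, y - x} : Set X) := by
      simp only [upperBounds_insert, upperBounds_singleton, Set.mem_inter_iff, Set.mem_Ici]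
      exact ⟨h₁, h₂⟩
    rwa [← h] at hz
  · intro h
    ext z
    simp only [upperBounds_insert, upperBounds_singleton, Set.mem_inter_iff, Set.mem_Ici]
    constructor
    · intro hz
      exact ⟨((sub_le_self x hy).trans (le_add_of_nonneg_right hy)).trans hz,
        ((sub_le_self y hx).trans (le_add_of_nonneg_left hx)).trans hz⟩
    · rintro ⟨h₁, h₂⟩
      exact h z h₁ h₂

end OrderedAddCommGroup

theorem disjoint_of_le_general {X : Type*} [AddCommGroup X] [PartialOrder X] [IsOrderedAddMonoid X]
    (x₁ x₂ y : X) (hx₁ : 0 ≤ x₁) (h12 : x₁ ≤ x₂) (hy : 0 ≤ y) (h : Disj x₂ y) :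
    Disj x₁ y := by
  rw [disj_iff_of_nonneg (hx₁.trans h12) hy] at h
  rw [disj_iff_of_nonneg hx₁ hy]
  intro z h₁ h₂
  have hd : 0 ≤ x₂ - x₁ := sub_nonneg.2 h12
  -- Shifting `z` by `x₂ - x₁` turns it into an upper bound of `x₂ - y` and `y - x₂`.
  have hbound : x₂ + y ≤ z + (x₂ - x₁) := by
    refine h _ ?_ ((sub_le_sub_left h12 y).trans (h₂.trans (le_add_of_nonneg_right hd)))
    calc x₂ - y = (x₁ - y) + (x₂ - x₁) := by abel
      _ ≤ z + (x₂ - x₁) := add_le_add_left h₁ _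
  calc x₁ + y = x₂ + y - (x₂ - x₁) := by abel
    _ ≤ z := sub_le_iff_le_add.2 hbound

theorem disjoint_of_le {X : Type*} [AddCommGroup X] [PartialOrder X] [IsOrderedAddMonoid X] [Module ℝ X] [PosSMulStrictMono ℝ X] [PosSMulReflectLT ℝ X]
    (x₁ x₂ y : X) (hx₁ : 0 ≤ x₁) (h12 : x₁ ≤ x₂) (hy : 0 ≤ y) (h : Disj x₂ y) :
    Disj x₁ y :=
  disjoint_of_le_general x₁ x₂ y hx₁ h12 hy h
end

section
/- In a partially ordered vector space, if a positive vector x can be written as x = y + z with y and z disjoint, then both y and z are positive. -/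
/-! If `y + z ≥ 0`, then `y + z` is an upper bound of `{y + z, -(y + z)}`, hence, by disjointness,
of `{y - z, z - y}`. Thus `2z` and `2y` are positive, and halving in a real ordered vector space
gives `y, z ≥ 0`. -/

section

variable {X : Type*} [AddCommGroup X] [PartialOrder X] [IsOrderedAddMonoid X]

theorem mem_upperBounds_pair_neg_of_nonneg {x : X} (hx : 0 ≤ x) :
    x ∈ upperBounds ({x, -x} : Set X) := by
  simp only [upperBounds_insert, upperBounds_singleton, Set.mem_inter_iff, Set.mem_Ici, le_refl,
    true_and]
  exact (neg_nonpos.mpr hx).trans hx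

theorem Disj.sub_le_add {y z : X} (h : Disj y z) (hyz : 0 ≤ y + z) :
    y - z ≤ y + z ∧ z - y ≤ y + z := by
  have hub := mem_upperBounds_pair_neg_of_nonneg hyz
  rw [neg_add', h] at hub
  exact ⟨hub (by simp), hub (by simp)⟩

end

theorem nonneg_of_nonneg_add_self {X : Type*} [AddCommGroup X] [PartialOrder X] [Module ℝ X]
    [PosSMulStrictMono ℝ X] {v : X} (hv : 0 ≤ v + v) : 0 ≤ v := by
  rw [← two_smul ℝ] at hv
  exact nonneg_of_smul_nonneg_of_pos_left hv two_pos

theorem pos_of_disjoint_decomposition {X : Type*} [AddCommGroup X] [PartialOrder X]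
    [IsOrderedAddMonoid X] [Module ℝ X] [PosSMulStrictMono ℝ X] (y z : X) (hx : 0 ≤ y + z) (h : Disj y z) :
    0 ≤ y ∧ 0 ≤ z := by
  obtain ⟨hz, hy⟩ := h.sub_le_add hx
  refine ⟨nonneg_of_nonneg_add_self ?_, nonneg_of_nonneg_add_self ?_⟩
  · simpa [add_sub_assoc] using sub_nonneg.mpr hy
  · simpa using sub_nonneg.mpr hz
end

section
/- Let X be a partially ordered vector space with generating cone (X_+ - X_+ = X). If P and Q are linear projections on X such that P, I-P, Q, I-Q are all positive and P and Q have the same range, then P = Q. -/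
/-! Equal ranges give `Q ∘ P = P` and `P ∘ Q = Q`. For `x ≥ 0`, positivity of `Q (x - P x) = Q x - P x`
and of `P (x - Q x) = P x - Q x` squeezes `P x = Q x`, and a generating cone spreads this to all of `X`. -/

theorem LinearMap.ext_of_forall_nonneg {R X Y : Type*} [Semiring R] [AddCommGroup X] [LE X]
    [Module R X] [AddCommGroup Y] [Module R Y]
    (hgen : ∀ x : X, ∃ a b : X, 0 ≤ a ∧ 0 ≤ b ∧ x = a - b) {f g : X →ₗ[R] Y}
    (h : ∀ x, 0 ≤ x → f x = g x) : f = g := by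
  ext x
  obtain ⟨a, b, ha, hb, rfl⟩ := hgen x
  rw [map_sub, map_sub, h a ha, h b hb]

theorem LinearMap.apply_le_apply_of_comp_eq {R X : Type*} [Semiring R] [AddCommGroup X]
    [PartialOrder X] [IsOrderedAddMonoid X] [Module R X] {P Q : X →ₗ[R] X}
    (hQpos : ∀ x : X, 0 ≤ x → 0 ≤ Q x) (hPcompl : ∀ x : X, 0 ≤ x → 0 ≤ x - P x)
    (hQP : Q ∘ₗ P = P) {x : X} (hx : 0 ≤ x) : P x ≤ Q x := by
  have h := hQpos _ (hPcompl x hx)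
  rwa [map_sub, ← LinearMap.comp_apply, hQP, sub_nonneg] at h

theorem order_projection_unique_general {X : Type*} [AddCommGroup X] [PartialOrder X] [IsOrderedAddMonoid X] [Module ℝ X]
    (hgen : ∀ x : X, ∃ a b : X, 0 ≤ a ∧ 0 ≤ b ∧ x = a - b)
    (P Q : X →ₗ[ℝ] X) (hP : P ∘ₗ P = P) (hQ : Q ∘ₗ Q = Q)
    (hPpos : ∀ x : X, 0 ≤ x → 0 ≤ P x) (hPcompl : ∀ x : X, 0 ≤ x → 0 ≤ x - P x)
    (hQpos : ∀ x : X, 0 ≤ x → 0 ≤ Q x) (hQcompl : ∀ x : X, 0 ≤ x → 0 ≤ x - Q x)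
    (hrange : LinearMap.range P = LinearMap.range Q) :
    P = Q := by
  have hQP : Q ∘ₗ P = P := (LinearMap.IsIdempotentElem.comp_eq_right_iff hQ P).mpr hrange.le
  have hPQ : P ∘ₗ Q = Q := (LinearMap.IsIdempotentElem.comp_eq_right_iff hP Q).mpr hrange.ge
  exact LinearMap.ext_of_forall_nonneg hgen fun x hx =>
    le_antisymm (LinearMap.apply_le_apply_of_comp_eq hQpos hPcompl hQP hx)
      (LinearMap.apply_le_apply_of_comp_eq hPpos hQcompl hPQ hx)

theorem order_projection_unique {X : Type*} [AddCommGroup X] [PartialOrder X] [IsOrderedAddMonoid X] [Module ℝ X]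
    [PosSMulStrictMono ℝ X] [PosSMulReflectLT ℝ X]
    (hgen : ∀ x : X, ∃ a b : X, 0 ≤ a ∧ 0 ≤ b ∧ x = a - b)
    (P Q : X →ₗ[ℝ] X) (hP : P ∘ₗ P = P) (hQ : Q ∘ₗ Q = Q)
    (hPpos : ∀ x : X, 0 ≤ x → 0 ≤ P x) (hPcompl : ∀ x : X, 0 ≤ x → 0 ≤ x - P x)
    (hQpos : ∀ x : X, 0 ≤ x → 0 ≤ Q x) (hQcompl : ∀ x : X, 0 ≤ x → 0 ≤ x - Q x)
    (hrange : LinearMap.range P = LinearMap.range Q) :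
    P = Q :=
  order_projection_unique_general hgen P Q hP hQ hPpos hPcompl hQpos hQcompl hrange
end

section
/- Let X be an Archimedean partially ordered vector space with generating cone, and let P be a linear projection on X such that both P and Q := I - P are positive. If x ∈ P(X) and y ∈ Q(X) are both positive, then x and y are disjoint. -/
/-!
For positive `x`, `y` the upper bounds of `{x + y, -x - y}` are just those of `x + y`, which are
always upper bounds of `x - y` and `y - x`; so disjointness only asks that every upper bound `z`
of `±(x - y)` dominates `x + y`. Writing `P x = x`, `P y = 0`, positivity of `P` and `I - P` gives
`P z - x = P (z - (x - y)) ≥ 0` and `(I - P) z - y = (I - P) (z - (y - x)) ≥ 0`, and adding the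
two yields `z ≥ x + y`.
-/

section

variable {X : Type*} [AddCommGroup X] [PartialOrder X] [IsOrderedAddMonoid X]

theorem disj_of_nonneg {x y : X} (hx : 0 ≤ x) (hy : 0 ≤ y)
    (h : ∀ z, x - y ≤ z → y - x ≤ z → x + y ≤ z) : Disj x y := by
  have hxy : -x - y ≤ x + y := by rw [← neg_add']; exact neg_le_self (add_nonneg hx hy)
  have hsub : x - y ≤ x + y := by rw [sub_eq_add_neg]; exact add_le_add_right (neg_le_self hy) x
  have hsub' : y - x ≤ x + y := by
    rw [sub_eq_add_neg, add_comm x]; exact add_le_add_right (neg_le_self hx) y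
  ext z
  simp only [upperBounds_insert, upperBounds_singleton, Set.mem_inter_iff, Set.mem_Ici]
  constructor
  · rintro ⟨hz, -⟩
    exact ⟨hsub.trans hz, hsub'.trans hz⟩
  · rintro ⟨h₁, h₂⟩
    have hz := h z h₁ h₂
    exact ⟨hz, hxy.trans hz⟩

theorem IsIdempotentElem.add_le_of_sub_le_of_sub_le {R : Type*} [Ring R] [Module R X]
    {P : X →ₗ[R] X} (hP : IsIdempotentElem P) (hPpos : ∀ x, 0 ≤ x → 0 ≤ P x)
    (hQpos : ∀ x, 0 ≤ x → 0 ≤ x - P x) {x y z : X} (hx : x ∈ LinearMap.range P)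
    (hy : y ∈ LinearMap.range (LinearMap.id - P))
    (h₁ : x - y ≤ z) (h₂ : y - x ≤ z) : x + y ≤ z := by
  have hPx : P x = x := (LinearMap.IsIdempotentElem.mem_range_iff hP).1 hx
  have hPy : P y = 0 := by rwa [← LinearMap.mem_ker, LinearMap.IsIdempotentElem.ker_eq_range hP]
  have hPz : 0 ≤ P z - x := by
    have := hPpos _ (sub_nonneg.2 h₁)
    rwa [map_sub, map_sub, hPx, hPy, sub_zero] at this
  have hQz : 0 ≤ z - P z - y := by
    have := hQpos _ (sub_nonneg.2 h₂)
    rwa [map_sub, map_sub, hPx, hPy, show z - (y - x) - (P z - (0 - x)) = z - P z - y by abel]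
      at this
  rw [← sub_nonneg]
  calc (0 : X) ≤ (P z - x) + (z - P z - y) := add_nonneg hPz hQz
    _ = z - (x + y) := by abel

end

theorem range_elems_disjoint_general {X : Type*} [AddCommGroup X] [PartialOrder X] [IsOrderedAddMonoid X] [Module ℝ X]
    (P : X →ₗ[ℝ] X) (hP : P ∘ₗ P = P)
    (hPpos : ∀ x : X, 0 ≤ x → 0 ≤ P x)
    (hQpos : ∀ x : X, 0 ≤ x → 0 ≤ x - P x)
    (x y : X) (hx : x ∈ Set.range P) (hy : y ∈ Set.range (LinearMap.id - P : X →ₗ[ℝ] X))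
    (hxpos : 0 ≤ x) (hypos : 0 ≤ y) :
    Disj x y :=
  disj_of_nonneg hxpos hypos fun _ ↦
    IsIdempotentElem.add_le_of_sub_le_of_sub_le hP hPpos hQpos (LinearMap.mem_range.2 hx)
      (LinearMap.mem_range.2 hy)

theorem range_elems_disjoint {X : Type*} [AddCommGroup X] [PartialOrder X] [IsOrderedAddMonoid X] [Module ℝ X]
    [PosSMulStrictMono ℝ X] [PosSMulReflectLT ℝ X]
    (harch : ∀ x y : X, (∀ n : ℕ, 0 < n → n • x ≤ y) → x ≤ 0)
    (hgen : ∀ x : X, ∃ a b : X, 0 ≤ a ∧ 0 ≤ b ∧ x = a - b)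
    (P : X →ₗ[ℝ] X) (hP : P ∘ₗ P = P)
    (hPpos : ∀ x : X, 0 ≤ x → 0 ≤ P x)
    (hQpos : ∀ x : X, 0 ≤ x → 0 ≤ x - P x)
    (x y : X) (hx : x ∈ Set.range P) (hy : y ∈ Set.range (LinearMap.id - P : X →ₗ[ℝ] X))
    (hxpos : 0 ≤ x) (hypos : 0 ≤ y) :
    Disj x y :=
  range_elems_disjoint_general P hP hPpos hQpos x y hx hy hxpos hypos
end

section
/- Let X be a partially ordered vector space and let P be a linear projection on X with P and Q := I - P positive. If a positive vector x is disjoint to every positive vector in Q(X), then Qx = 0, i.e. x ∈ P(X). -/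
section Disj

variable {X : Type*} [AddCommGroup X] [PartialOrder X] [IsOrderedAddMonoid X] {x y : X}

theorem Disj.add_le_sub (h : Disj x y) (hyx : y ≤ x) : x + y ≤ x - y := by
  have hsub : 0 ≤ x - y := sub_nonneg.mpr hyx
  have hub : x - y ∈ upperBounds ({x - y, y - x} : Set X) := by
    rintro z (rfl | rfl)
    · exact le_rfl
    · calc y - x = -(x - y) := (neg_sub x y).symm
        _ ≤ 0 := neg_nonpos.mpr hsub
        _ ≤ x - y := hsub
  rw [← h] at hub
  exact hub (Set.mem_insert _ _)

theorem Disj.eq_zero_of_le (h : Disj x y) (hy : 0 ≤ y) (hyx : y ≤ x) : y = 0 := by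
  have hyy : y + y ≤ 0 := by
    have := h.add_le_sub hyx
    rw [sub_eq_add_neg] at this
    have := le_of_add_le_add_left this
    simpa using add_le_add_right this y
  exact le_antisymm ((le_add_of_nonneg_left hy).trans hyy) hy

end Disj

theorem mem_range_of_disjoint_to_complement_general {X : Type*} [AddCommGroup X] [PartialOrder X] [IsOrderedAddMonoid X] [Module ℝ X]
    (P : X →ₗ[ℝ] X)
    (hPpos : ∀ x : X, 0 ≤ x → 0 ≤ P x)
    (hQpos : ∀ x : X, 0 ≤ x → 0 ≤ x - P x)
    (x : X) (hxpos : 0 ≤ x)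
    (hdisj : ∀ y : X, 0 ≤ y → y ∈ Set.range (LinearMap.id - P : X →ₗ[ℝ] X) → Disj x y) :
    (LinearMap.id - P : X →ₗ[ℝ] X) x = 0 ∧ x ∈ Set.range P := by
  have hQx : (LinearMap.id - P : X →ₗ[ℝ] X) x = x - P x := rfl
  have hQx_pos : 0 ≤ x - P x := hQpos x hxpos
  have hQx_zero : x - P x = 0 :=
    (hdisj _ hQx_pos ⟨x, hQx⟩).eq_zero_of_le hQx_pos (sub_le_self x (hPpos x hxpos))
  exact ⟨hQx.trans hQx_zero, x, (sub_eq_zero.mp hQx_zero).symm⟩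

theorem mem_range_of_disjoint_to_complement {X : Type*} [AddCommGroup X] [PartialOrder X] [IsOrderedAddMonoid X] [Module ℝ X]
    [PosSMulStrictMono ℝ X] [PosSMulReflectLT ℝ X]
    (P : X →ₗ[ℝ] X) (hP : P ∘ₗ P = P)
    (hPpos : ∀ x : X, 0 ≤ x → 0 ≤ P x)
    (hQpos : ∀ x : X, 0 ≤ x → 0 ≤ x - P x)
    (x : X) (hxpos : 0 ≤ x)
    (hdisj : ∀ y : X, 0 ≤ y → y ∈ Set.range (LinearMap.id - P : X →ₗ[ℝ] X) → Disj x y) :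
    (LinearMap.id - P : X →ₗ[ℝ] X) x = 0 ∧ x ∈ Set.range P :=
  mem_range_of_disjoint_to_complement_general P hPpos hQpos x hxpos hdisj
end

section
/- Let X be an Archimedean partially ordered vector space with generating cone, and let P be a linear projection with P and Q := I - P positive. Then the range of P equals the disjoint complement of the range of Q, i.e. P(X) = (Q(X))^⊥. -/
/-- The disjoint complement of a set. -/
def DisjComp {X : Type*} [AddCommGroup X] [PartialOrder X] (S : Set X) : Set X :=
  {x | ∀ y ∈ S, Disj x y}

private lemma ub_pair_mem {X : Type*} [Preorder X] (p q z : X) :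
    z ∈ upperBounds ({p, q} : Set X) ↔ p ≤ z ∧ q ≤ z := by
  simp [upperBounds]

private lemma disj_iff {X : Type*} [AddCommGroup X] [PartialOrder X] (x y : X) :
    Disj x y ↔ ∀ z : X, (x + y ≤ z ∧ -x - y ≤ z) ↔ (x - y ≤ z ∧ y - x ≤ z) := by
  unfold Disj
  constructor
  · intro h z
    have := Set.ext_iff.1 h z
    rwa [ub_pair_mem, ub_pair_mem] at this
  · intro h
    ext z
    rw [ub_pair_mem, ub_pair_mem]
    exact h z

private lemma disj_of {X : Type*} [AddCommGroup X] [PartialOrder X] [IsOrderedAddMonoid X] [Module ℝ X]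
    (P : X →ₗ[ℝ] X)
    (hPpos : ∀ x : X, 0 ≤ x → 0 ≤ P x)
    (hQpos : ∀ x : X, 0 ≤ x → 0 ≤ x - P x)
    (x y : X) (hx : P x = x) (hy : P y = 0) : Disj x y := by
  have key : ∀ y : X, P y = 0 → ∀ z : X, x + y ≤ z → -x - y ≤ z →
      x - y ≤ z ∧ y - x ≤ z := by
    intro y hy z h1 h2
    have h1' : 0 ≤ z - (x + y) := sub_nonneg.2 h1
    have h2' : 0 ≤ z - (-x - y) := sub_nonneg.2 h2
    have hA := hPpos _ h1'
    have hB := hQpos _ h1'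
    have hC := hPpos _ h2'
    have hD := hQpos _ h2'
    rw [map_sub, map_add, hx, hy, add_zero] at hA hB
    rw [map_sub, map_sub, map_neg, hx, hy, sub_zero] at hC hD
    constructor
    · have := add_nonneg hA hD
      rw [show P z - x + (z - (-x - y) - (P z - -x)) = z - (x - y) by abel] at this
      exact sub_nonneg.1 this
    · have := add_nonneg hC hB
      rw [show P z - -x + (z - (x + y) - (P z - x)) = z - (y - x) by abel] at this
      exact sub_nonneg.1 this
  rw [disj_iff]
  intro z
  constructor
  · rintro ⟨h1, h2⟩
    exact key y hy z h1 h2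
  · rintro ⟨h1, h2⟩
    have hy' : P (-y) = 0 := by rw [map_neg, hy, neg_zero]
    have h1' : x + -y ≤ z := by rw [← sub_eq_add_neg]; exact h1
    have h2' : -x - -y ≤ z := by rw [show -x - -y = y - x by abel]; exact h2
    obtain ⟨g1, g2⟩ := key (-y) hy' z h1' h2'
    constructor
    · rw [show x - -y = x + y by abel] at g1; exact g1
    · rw [show -y - x = -x - y by abel] at g2; exact g2

theorem range_eq_disjoint_complement {X : Type*} [AddCommGroup X] [PartialOrder X] [IsOrderedAddMonoid X] [Module ℝ X]
    [PosSMulStrictMono ℝ X] [PosSMulReflectLT ℝ X]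
    (harch : ∀ x y : X, (∀ n : ℕ, 0 < n → n • x ≤ y) → x ≤ 0)
    (hgen : ∀ x : X, ∃ a b : X, 0 ≤ a ∧ 0 ≤ b ∧ x = a - b)
    (P : X →ₗ[ℝ] X) (hP : P ∘ₗ P = P)
    (hPpos : ∀ x : X, 0 ≤ x → 0 ≤ P x)
    (hQpos : ∀ x : X, 0 ≤ x → 0 ≤ x - P x) :
    Set.range P = DisjComp (Set.range (LinearMap.id - P : X →ₗ[ℝ] X)) := by
  have hPP : ∀ v : X, P (P v) = P v := fun v => DFunLike.congr_fun hP v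
  ext x
  simp only [Set.mem_range, DisjComp, Set.mem_setOf_eq]
  constructor
  · rintro ⟨u, rfl⟩ y hy
    obtain ⟨w, rfl⟩ := hy
    apply disj_of P hPpos hQpos
    · exact hPP u
    · simp only [LinearMap.sub_apply, LinearMap.id_apply, map_sub, hPP, sub_self]
  · intro hx
    -- abbreviations
    have hPb : P (x - P x) = 0 := by rw [map_sub, hPP, sub_self]
    have hPcb : ∀ c : ℝ, P (c • (x - P x)) = 0 := by
      intro c; rw [map_smul, hPb, smul_zero]
    have disj1 : ∀ c : ℝ, Disj (P x) (c • (x - P x)) :=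
      fun c => disj_of P hPpos hQpos _ _ (hPP x) (hPcb c)
    have disj2 : ∀ c : ℝ, Disj x (c • (x - P x)) := by
      intro c
      apply hx
      refine ⟨c • x, ?_⟩
      rw [LinearMap.sub_apply, LinearMap.id_apply, map_smul, ← smul_sub]
    obtain ⟨cc, dd, hcc, hdd, hacd⟩ := hgen (P x)
    set z : X := cc + dd with hz
    have hz1 : P x ≤ z := by
      rw [hacd, hz]
      calc cc - dd = cc + -dd := sub_eq_add_neg _ _
        _ ≤ cc + dd := add_le_add_right (neg_le_self hdd) cc
    have hz2 : -P x ≤ z := by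
      rw [hacd, hz]
      calc -(cc - dd) = -cc + dd := by abel
        _ ≤ cc + dd := add_le_add_left (neg_le_self hcc) dd
    have main : ∀ n : ℕ,
        P x + (2 * (n:ℝ)) • (x - P x) ≤ z ∧ -(P x + (2 * (n:ℝ)) • (x - P x)) ≤ z := by
      intro n
      induction n with
      | zero =>
        simp only [Nat.cast_zero, mul_zero, zero_smul, add_zero]
        exact ⟨hz1, hz2⟩
      | succ n ih =>
        obtain ⟨i1, i2⟩ := ih
        have i2' : -P x - (2 * (n:ℝ)) • (x - P x) ≤ z := by
          rw [show -P x - (2 * (n:ℝ)) • (x - P x)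
              = -(P x + (2 * (n:ℝ)) • (x - P x)) by module]
          exact i2
        obtain ⟨j1, j2⟩ := ((disj_iff _ _).1 (disj1 (2 * n)) z).1 ⟨i1, i2'⟩
        -- j1 : P x - (2n)•b ≤ z, j2 : (2n)•b - P x ≤ z
        have j1' : x - (2 * (n:ℝ) + 1) • (x - P x) ≤ z := by
          rw [show x - (2 * (n:ℝ) + 1) • (x - P x)
              = P x - (2 * (n:ℝ)) • (x - P x) by module]
          exact j1
        have j2' : (2 * (n:ℝ) + 1) • (x - P x) - x ≤ z := by
          rw [show (2 * (n:ℝ) + 1) • (x - P x) - x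
              = (2 * (n:ℝ)) • (x - P x) - P x by module]
          exact j2
        obtain ⟨k1, k2⟩ := ((disj_iff _ _).1 (disj2 (2 * n + 1)) z).2 ⟨j1', j2'⟩
        -- k1 : x + (2n+1)•b ≤ z, k2 : -x - (2n+1)•b ≤ z
        push_cast
        constructor
        · rw [show P x + (2 * ((n:ℝ) + 1)) • (x - P x)
              = x + (2 * (n:ℝ) + 1) • (x - P x) by module]
          exact k1
        · rw [show -(P x + (2 * ((n:ℝ) + 1)) • (x - P x))
              = -x - (2 * (n:ℝ) + 1) • (x - P x) by module]
          exact k2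
    have hb1 : (x - P x) + (x - P x) ≤ 0 := by
      apply harch _ (z + z)
      intro n hn
      have h1 := (main n).1
      calc n • ((x - P x) + (x - P x)) = (2 * (n:ℝ)) • (x - P x) := by
            rw [← Nat.cast_smul_eq_nsmul ℝ n ((x - P x) + (x - P x))]
            module
        _ ≤ z - P x := le_sub_iff_add_le.2 (by rwa [add_comm] at h1)
        _ = z + -P x := sub_eq_add_neg _ _
        _ ≤ z + z := add_le_add_right hz2 z
    have hb2 : -(x - P x) + -(x - P x) ≤ 0 := by
      apply harch _ (z + z)
      intro n hn
      have h2 := (main n).2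
      calc n • (-(x - P x) + -(x - P x))
            = -(P x + (2 * (n:ℝ)) • (x - P x)) + P x := by
            rw [← Nat.cast_smul_eq_nsmul ℝ n (-(x - P x) + -(x - P x))]
            module
        _ ≤ z + P x := add_le_add_left h2 _
        _ ≤ z + z := add_le_add_right hz1 z
    have hb0 : (x - P x) + (x - P x) = 0 := by
      refine le_antisymm hb1 ?_
      have : -((x - P x) + (x - P x)) ≤ 0 := by
        rw [show -((x - P x) + (x - P x)) = -(x - P x) + -(x - P x) by abel]
        exact hb2
      exact neg_nonpos.1 this
    have hb : x - P x = 0 := by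
      have h2 : (2:ℝ) • (x - P x) = 0 := by
        rw [show (2:ℝ) • (x - P x) = (x - P x) + (x - P x) by module, hb0]
      rcases smul_eq_zero.1 h2 with h | h
      · norm_num at h
      · exact h
    exact ⟨x, by rw [← sub_eq_zero]; rw [show P x - x = -(x - P x) by abel, hb, neg_zero]⟩
end

section
/- Let X be an Archimedean partially ordered vector space with generating cone. If V is a vector subspace of X such that X = V + V^⊥, then V ∩ V^⊥ = {0} and the projection onto V along V^⊥ is positive with positive complement; in particular V is a projection band. -/
/-! If `u` majorizes `±a ± b` and `a, b, c ⊥ d` with `a + b = c + d`, then, reading `x ⊥ y` as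
"`±(x + y)` and `±(x - y)` have the same upper bounds" and shifting, one can add `2d` to all
four of `±a ± b` and stay below `u`. Iterating, `n • 2d ≤ u - (a + b)` for every `n`, so `d ≤ 0`
in an Archimedean space (a generating cone provides `u`); applied to `-d` as well, `d = 0`.
With `X = V + V^⊥` this makes `V^⊥` closed under addition (write `w₁ + w₂ = v + w`) and gives
`V^⊥⊥ ⊆ V` (write `x = v + w` and use `x + (-v) = 0 + w`), so `X = V ⊕ V^⊥`. The projection
is positive: if `v ⊥ w` and `x = v + w ≥ 0`, then `x` majorizes `±(v + w)`, hence `±(v - w)`,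
which yields `0 ≤ 2v` and `0 ≤ 2w`. -/

def IsArchimedeanSpace (X : Type*) [AddCommGroup X] [PartialOrder X] : Prop :=
  ∀ x y : X, (∀ n : ℕ, 0 < n → n • x ≤ y) → x ≤ 0

def HasGeneratingCone (X : Type*) [AddCommGroup X] [PartialOrder X] : Prop :=
  ∀ x : X, ∃ a b : X, 0 ≤ a ∧ 0 ≤ b ∧ x = a - b

section Group

variable {X : Type*} [AddCommGroup X] [PartialOrder X] {x y : X}

theorem disj_iff_upperBounds :
    Disj x y ↔ upperBounds {x + y, -(x + y)} = upperBounds {x - y, -(x - y)} := by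
  rw [Disj, neg_add', neg_sub]

theorem Disj.symm (h : Disj x y) : Disj y x := by
  rw [disj_iff_upperBounds] at *
  rw [add_comm y x, ← neg_sub x y, neg_neg, Set.pair_comm (-(x - y)), h]

theorem Disj.neg_right (h : Disj x y) : Disj x (-y) := by
  rw [disj_iff_upperBounds] at *
  rw [← sub_eq_add_neg, sub_neg_eq_add, h]

theorem Disj.neg_left (h : Disj x y) : Disj (-x) y :=
  h.symm.neg_right.symm

theorem disj_zero_left (y : X) : Disj 0 y := by
  rw [disj_iff_upperBounds, zero_add, zero_sub, neg_neg, Set.pair_comm]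

theorem subset_disjComp_disjComp (S : Set X) : S ⊆ DisjComp (DisjComp S) :=
  fun x hx _ hy ↦ (hy x hx).symm

end Group

section Module

variable {X : Type*} [AddCommGroup X] [PartialOrder X] [Module ℝ X] [PosSMulMono ℝ X]
  [PosSMulReflectLE ℝ X] {x y : X}

theorem Disj.smul {c : ℝ} (hc : 0 < c) (h : Disj x y) : Disj (c • x) (c • y) := by
  have himage : ∀ z : X, ({c • z, -(c • z)} : Set X) = OrderIso.smulRight hc '' {z, -z} := by
    simp [Set.image_pair]
  rw [disj_iff_upperBounds] at *
  rw [← smul_add, ← smul_sub, himage, himage, OrderIso.upperBounds_image,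
    OrderIso.upperBounds_image, h]

theorem smul_mem_disjComp (V : Submodule ℝ X) {w : X} (hw : w ∈ DisjComp (V : Set X)) (c : ℝ) :
    c • w ∈ DisjComp (V : Set X) := by
  have pos : ∀ c : ℝ, 0 < c → c • w ∈ DisjComp (V : Set X) := fun c hc y hy ↦ by
    simpa [smul_inv_smul₀ hc.ne'] using (hw _ (V.smul_mem c⁻¹ hy)).smul hc
  rcases lt_trichotomy c 0 with hc | rfl | hc
  · intro y hy
    simpa using (pos (-c) (neg_pos.mpr hc) y hy).neg_left
  · rw [zero_smul]
    exact fun y _ ↦ disj_zero_left y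
  · exact pos c hc

end Module

section OrderedGroup

variable {X : Type*} [AddCommGroup X] [PartialOrder X] [IsOrderedAddMonoid X] {x y : X}

theorem Disj.add_le_iff (h : Disj x y) (t u : X) :
    (x + y + t ≤ u ∧ -(x + y) + t ≤ u) ↔ (x - y + t ≤ u ∧ -(x - y) + t ≤ u) := by
  simpa only [upperBounds, Set.mem_insert_iff, Set.mem_singleton_iff, forall_eq_or_imp,
    forall_eq, Set.mem_ofPred_eq, ← le_sub_iff_add_le] using
    Set.ext_iff.mp (disj_iff_upperBounds.mp h) (u - t)

theorem Disj.add_self_eq_zero (h : Disj x x) : x + x = 0 := by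
  have h0 : (0 : X) ∈ upperBounds {x + x, -(x + x)} := by
    rw [disj_iff_upperBounds.mp h, sub_self, neg_zero]
    simp [upperBounds]
  exact le_antisymm (h0 (by simp)) (neg_nonpos.mp (h0 (by simp)))

theorem Disj.add_self_nonneg_of_add_nonneg (h : Disj x y) (hxy : 0 ≤ x + y) :
    0 ≤ x + x ∧ 0 ≤ y + y := by
  obtain ⟨hxy', hyx'⟩ := (h.add_le_iff 0 (x + y)).mp
    ⟨by rw [add_zero], by rw [add_zero]; exact (neg_nonpos.mpr hxy).trans hxy⟩
  simp only [add_zero, neg_sub] at hxy' hyx'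
  constructor
  · calc (0 : X) = (y - x) + (x - y) := by abel
      _ ≤ (x + y) + (x - y) := by gcongr
      _ = x + x := by abel
  · calc (0 : X) = (x - y) + (y - x) := by abel
      _ ≤ (x + y) + (y - x) := by gcongr
      _ = y + y := by abel

theorem exists_le_and_neg_le (hgen : HasGeneratingCone X) (x : X) :
    ∃ u, x ≤ u ∧ -x ≤ u := by
  obtain ⟨a, b, ha, hb, rfl⟩ := hgen x
  refine ⟨a + b, (sub_le_self a hb).trans (le_add_of_nonneg_right hb), ?_⟩
  rw [neg_sub]
  exact (sub_le_self b ha).trans (le_add_of_nonneg_left ha)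

theorem Disj.le_add_add_self_of_add_eq {a b c d t u : X} (ha : Disj a d) (hb : Disj b d)
    (hc : Disj c d) (heq : a + b = c + d)
    (h : ∀ z ∈ ({a + b, -(a + b), a - b, -(a - b)} : Set X), z + t ≤ u) :
    ∀ z ∈ ({a + b, -(a + b), a - b, -(a - b)} : Set X), z + (t + (d + d)) ≤ u := by
  simp only [Set.mem_insert_iff, Set.mem_singleton_iff, forall_eq_or_imp, forall_eq] at h ⊢
  obtain ⟨h₁, h₂, h₃, h₄⟩ := h
  have hc' : c = a + b - d := eq_sub_of_add_eq heq.symm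
  have n₂ : -(a + b) + (t + (d + d)) ≤ u := Eq.trans_le (by rw [hc']; abel)
    ((hc.add_le_iff t u).mp
      ⟨Eq.trans_le (by rw [heq]) h₁, Eq.trans_le (by rw [hc']; abel) h₂⟩).2
  have n₄ : -(a - b) + (t + (d + d)) ≤ u := Eq.trans_le (by abel)
    ((hb.add_le_iff (d - a + t) u).mpr
      ⟨Eq.trans_le (by abel) h₄, Eq.trans_le (by abel) n₂⟩).1
  have n₃ : a - b + (t + (d + d)) ≤ u := Eq.trans_le (by abel)
    ((ha.add_le_iff (d - b + t) u).mpr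
      ⟨Eq.trans_le (by abel) h₃, Eq.trans_le (by abel) n₂⟩).1
  have n₁ : a + b + (t + (d + d)) ≤ u := Eq.trans_le (by abel)
    ((ha.add_le_iff (b + d + t) u).mpr
      ⟨Eq.trans_le (by abel) h₁, Eq.trans_le (by abel) n₄⟩).1
  exact ⟨n₁, n₂, n₃, n₄⟩

end OrderedGroup

section OrderedModule

variable {X : Type*} [AddCommGroup X] [PartialOrder X] [IsOrderedAddMonoid X] [Module ℝ X]
  {x y : X}

theorem disj_self_iff : Disj x x ↔ x = 0 := by
  refine ⟨fun h ↦ ?_, fun h ↦ h ▸ disj_zero_left 0⟩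
  have h2 : (2 : ℝ) • x = 0 := by rw [two_smul]; exact h.add_self_eq_zero
  exact (smul_eq_zero.mp h2).resolve_left two_ne_zero

theorem inter_disjComp_eq_zero (V : Submodule ℝ X) :
    (V : Set X) ∩ DisjComp (V : Set X) = {0} := by
  refine Set.eq_singleton_iff_unique_mem.mpr ⟨⟨V.zero_mem, fun y _ ↦ disj_zero_left y⟩, ?_⟩
  rintro x ⟨hxV, hx⟩
  exact disj_self_iff.mp (hx x hxV)

variable [PosSMulReflectLE ℝ X]

theorem Disj.nonneg_of_add_nonneg (h : Disj x y) (hxy : 0 ≤ x + y) : 0 ≤ x ∧ 0 ≤ y := by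
  have half : ∀ z : X, 0 ≤ z + z → 0 ≤ z := fun z hz ↦
    nonneg_of_smul_nonneg_of_pos_left (by rwa [two_smul]) (two_pos : (0 : ℝ) < 2)
  obtain ⟨hx, hy⟩ := h.add_self_nonneg_of_add_nonneg hxy
  exact ⟨half x hx, half y hy⟩

theorem Disj.nonpos_of_add_eq (harch : IsArchimedeanSpace X) (hgen : HasGeneratingCone X)
    {a b c d : X} (ha : Disj a d) (hb : Disj b d) (hc : Disj c d) (heq : a + b = c + d) :
    d ≤ 0 := by
  obtain ⟨u₁, ha₁, ha₂⟩ := exists_le_and_neg_le hgen a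
  obtain ⟨u₂, hb₁, hb₂⟩ := exists_le_and_neg_le hgen b
  have hbound : ∀ n : ℕ, ∀ z ∈ ({a + b, -(a + b), a - b, -(a - b)} : Set X),
      z + n • (d + d) ≤ u₁ + u₂ := by
    intro n
    induction n with
    | zero =>
      simp only [zero_smul, add_zero, Set.mem_insert_iff, Set.mem_singleton_iff,
        forall_eq_or_imp, forall_eq, neg_add, sub_eq_add_neg, neg_neg]
      exact ⟨add_le_add ha₁ hb₁, add_le_add ha₂ hb₂, add_le_add ha₁ hb₂, add_le_add ha₂ hb₁⟩
    | succ n ih =>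
      rw [succ_nsmul]
      exact ha.le_add_add_self_of_add_eq hb hc heq ih
  have hdd : d + d ≤ 0 := harch _ (u₁ + u₂ - (a + b)) fun n _ ↦
    le_sub_iff_add_le'.mpr (hbound n _ (by simp))
  exact nonpos_of_smul_nonpos_of_pos_left (by rwa [two_smul]) (two_pos : (0 : ℝ) < 2)

theorem Disj.eq_zero_of_add_eq (harch : IsArchimedeanSpace X) (hgen : HasGeneratingCone X)
    {a b c d : X} (ha : Disj a d) (hb : Disj b d) (hc : Disj c d) (heq : a + b = c + d) :
    d = 0 := by
  refine le_antisymm (ha.nonpos_of_add_eq harch hgen hb hc heq) (neg_nonpos.mp ?_)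
  exact hc.neg_right.nonpos_of_add_eq harch hgen hb.neg_left.neg_right ha.neg_right
    (by rw [eq_sub_of_add_eq heq]; abel)

theorem add_mem_disjComp (harch : IsArchimedeanSpace X) (hgen : HasGeneratingCone X)
    {S : Set X} (hsum : ∀ x : X, ∃ v ∈ S, ∃ w ∈ DisjComp S, x = v + w) {w₁ w₂ : X}
    (h₁ : w₁ ∈ DisjComp S) (h₂ : w₂ ∈ DisjComp S) : w₁ + w₂ ∈ DisjComp S := by
  obtain ⟨v, hv, w, hw, he⟩ := hsum (w₁ + w₂)
  obtain rfl : v = 0 :=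
    (h₁ v hv).eq_zero_of_add_eq harch hgen (h₂ v hv) (hw v hv) (by rw [he, add_comm])
  rwa [he, zero_add]

theorem disjComp_disjComp_eq (harch : IsArchimedeanSpace X) (hgen : HasGeneratingCone X)
    {S : Set X} (hsum : ∀ x : X, ∃ v ∈ S, ∃ w ∈ DisjComp S, x = v + w) :
    DisjComp (DisjComp S) = S := by
  refine subset_antisymm (fun x hx ↦ ?_) (subset_disjComp_disjComp S)
  obtain ⟨v, hv, w, hw, rfl⟩ := hsum x
  obtain rfl : w = 0 := (hx w hw).eq_zero_of_add_eq harch hgen (hw v hv).symm.neg_left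
    (disj_zero_left w) (by abel)
  rwa [add_zero]

variable [PosSMulMono ℝ X]

def disjCompSubmodule (harch : IsArchimedeanSpace X) (hgen : HasGeneratingCone X)
    (V : Submodule ℝ X) (hsum : ∀ x : X, ∃ v ∈ V, ∃ w ∈ DisjComp (V : Set X), x = v + w) :
    Submodule ℝ X where
  carrier := DisjComp (V : Set X)
  zero_mem' := fun y _ ↦ disj_zero_left y
  add_mem' := add_mem_disjComp harch hgen hsum
  smul_mem' := fun c _ hw ↦ smul_mem_disjComp V hw c

theorem isCompl_disjCompSubmodule (harch : IsArchimedeanSpace X) (hgen : HasGeneratingCone X)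
    (V : Submodule ℝ X) (hsum : ∀ x : X, ∃ v ∈ V, ∃ w ∈ DisjComp (V : Set X), x = v + w) :
    IsCompl V (disjCompSubmodule harch hgen V hsum) := by
  refine ⟨Submodule.disjoint_def.mpr fun x hxV hx ↦ ?_, codisjoint_iff.mpr ?_⟩
  · exact (inter_disjComp_eq_zero V).subset ⟨hxV, hx⟩
  · refine eq_top_iff.mpr fun x _ ↦ ?_
    obtain ⟨v, hv, w, hw, rfl⟩ := hsum x
    exact Submodule.add_mem_sup hv hw

end OrderedModule

theorem subspace_projection_band_general {X : Type*} [AddCommGroup X] [PartialOrder X] [IsOrderedAddMonoid X]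
    [Module ℝ X]
    [PosSMulStrictMono ℝ X]
    (harch : ∀ x y : X, (∀ n : ℕ, 0 < n → n • x ≤ y) → x ≤ 0)
    (hgen : ∀ x : X, ∃ a b : X, 0 ≤ a ∧ 0 ≤ b ∧ x = a - b)
    (V : Submodule ℝ X)
    (hsum : ∀ x : X, ∃ v ∈ V, ∃ w ∈ DisjComp (V : Set X), x = v + w) :
    (V : Set X) ∩ DisjComp (V : Set X) = {0} ∧
    (∃ P : X →ₗ[ℝ] X, P ∘ₗ P = P ∧ LinearMap.range P = V ∧
      (∀ w ∈ DisjComp (V : Set X), P w = 0) ∧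
      (∀ x : X, 0 ≤ x → 0 ≤ P x ∧ P x ≤ x)) ∧
    DisjComp (DisjComp (V : Set X)) = (V : Set X) := by
  have hVW := isCompl_disjCompSubmodule harch hgen V hsum
  refine ⟨inter_disjComp_eq_zero V, ⟨V.projection _ hVW, V.isIdempotentElem_projection hVW,
    V.range_projection hVW, fun w hw ↦ Submodule.projection_apply_of_mem_right hVW hw,
    fun x hx ↦ ?_⟩, disjComp_disjComp_eq harch hgen hsum⟩
  obtain ⟨v, hv, w, hw, rfl⟩ := hsum x
  rw [map_add, Submodule.projection_apply_of_mem_left hVW hv,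
    Submodule.projection_apply_of_mem_right hVW hw, add_zero]
  obtain ⟨hv₀, hw₀⟩ := (hw v hv).symm.nonneg_of_add_nonneg hx
  exact ⟨hv₀, le_add_of_nonneg_right hw₀⟩

theorem subspace_projection_band {X : Type*} [AddCommGroup X] [PartialOrder X] [IsOrderedAddMonoid X]
    [Module ℝ X]
    [PosSMulStrictMono ℝ X] [PosSMulReflectLT ℝ X]
    (harch : ∀ x y : X, (∀ n : ℕ, 0 < n → n • x ≤ y) → x ≤ 0)
    (hgen : ∀ x : X, ∃ a b : X, 0 ≤ a ∧ 0 ≤ b ∧ x = a - b)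
    (V : Submodule ℝ X)
    (hsum : ∀ x : X, ∃ v ∈ V, ∃ w ∈ DisjComp (V : Set X), x = v + w) :
    (V : Set X) ∩ DisjComp (V : Set X) = {0} ∧
    (∃ P : X →ₗ[ℝ] X, P ∘ₗ P = P ∧ LinearMap.range P = V ∧
      (∀ w ∈ DisjComp (V : Set X), P w = 0) ∧
      (∀ x : X, 0 ≤ x → 0 ≤ P x ∧ P x ≤ x)) ∧
    DisjComp (DisjComp (V : Set X)) = (V : Set X) :=
  subspace_projection_band_general harch hgen V hsum
end
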